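/- Let Z be a nonempty subset of V with V∖Z finite. For any i ≥ 0 and any vertices a_0, a_1, …, a_{i−1} of G, the map ρ ↦ ξ_i(a_0,…,a_{i−1}, Z; ρ) is a bijection from SF(Z) to SF(Z); consequently, if ρ is sampled from the uniform measure OUSF(Z) on SF(Z), then ξ_i(a_0,…,a_{i−1}, Z; ρ) also has law OUSF(Z). -/

import Mathlib

open Classical

universe u

variable {V : Type u}

/-- A rotor mechanism: for each vertex `x`, `τ x` restricts to a bijection of the
neighbor set of `x` having a single orbit. -/
def IsMechanism (G : SimpleGraph V) (τ : V → V → V) : Prop :=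
  ∀ x : V, Set.BijOn (τ x) (G.neighborSet x) (G.neighborSet x) ∧
    ∀ y ∈ G.neighborSet x, ∀ z ∈ G.neighborSet x, ∃ i : ℕ, (τ x)^[i] y = z

/-- One step of the rotor walk with sink `Z`; the walk freezes once it reaches `Z`. -/
noncomputable def rotorStep [DecidableEq V] (τ : V → V → V) (Z : Set V) :
    V × (V → V) → V × (V → V) := fun p =>
  if p.1 ∈ Z then p
  else (τ p.1 (p.2 p.1), Function.update p.2 p.1 (τ p.1 (p.2 p.1)))

/-- The rotor walk with initial location `a`, sink `Z` and initial rotor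
configuration `ρ`: position (first component) and rotor configuration
(second component) at time `t`. -/
noncomputable def rotorWalk [DecidableEq V] (τ : V → V → V) (Z : Set V)
    (a : V) (ρ : V → V) (t : ℕ) : V × (V → V) :=
  (rotorStep τ Z)^[t] (a, ρ)

/-- `Z`-oriented spanning forests of `G`, viewed as rotor configurations,
normalized to be the identity on `Z` (the values on `Z` are inconsequential). -/
def SFset (G : SimpleGraph V) (Z : Set V) : Set (V → V) :=
  {ρ | (∀ x ∉ Z, G.Adj x (ρ x)) ∧ (∀ x : V, ∃ ℓ : ℕ, ρ^[ℓ] x ∈ Z) ∧ ∀ x ∈ Z, ρ x = x}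

/-- The eventual value of an eventually-constant sequence. -/
noncomputable def eventualVal (f : ℕ → V) : V :=
  if h : ∃ t : ℕ, ∀ s : ℕ, t ≤ s → f s = f t then f h.choose else f 0

/-- The final rotor configuration `σ(a, Z; ρ)` of the rotor walk. -/
noncomputable def finalConfig [DecidableEq V] (τ : V → V → V) (Z : Set V)
    (a : V) (ρ : V → V) : V → V :=
  fun x => eventualVal fun t => (rotorWalk τ Z a ρ t).2 x

/-- `ξ_i(a_0, …, a_{i-1}, Z; ρ)`: the rotor configuration after `i` successive
walkers, started at `a_0, …, a_{i-1}`, have performed rotor walks with sink `Z`. -/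
noncomputable def xiConfig [DecidableEq V] (τ : V → V → V) (Z : Set V) (av : ℕ → V) :
    ℕ → (V → V) → (V → V)
  | 0, ρ => ρ
  | i + 1, ρ => finalConfig τ Z (av i) (xiConfig τ Z av i ρ)

/-- The set of times at which the rotor walk (run until it first reaches the
sink `Z`) is at a vertex of `W`; its cardinality is the odometer `u(a,Z;ρ)(W)`. -/
def visitTimes [DecidableEq V] (τ : V → V → V) (Z : Set V) (a : V) (ρ : V → V)
    (W : Set V) : Set ℕ :=
  {t | (rotorWalk τ Z a ρ t).1 ∈ W ∧ ∀ s < t, (rotorWalk τ Z a ρ s).1 ∉ Z}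

/-- The event `E_{r,W}(a,Z)`: the rotor walk with initial location `a` and sink `Z`
visits `W` some time after visiting a vertex at graph distance at least `r` from `W`. -/
def Eset [DecidableEq V] (G : SimpleGraph V) (τ : V → V → V) (r : ℕ) (W : Set V)
    (a : V) (Z : Set V) : Set (V → V) :=
  {ρ | ∃ t₁ t₂ : ℕ, t₁ < t₂ ∧ (∀ s < t₂, (rotorWalk τ Z a ρ s).1 ∉ Z) ∧
    (∀ w ∈ W, r ≤ G.dist w (rotorWalk τ Z a ρ t₁).1) ∧ (rotorWalk τ Z a ρ t₂).1 ∈ W}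

/-- The event `D_r` (relative to the set `Z`): there is an oriented path in `ρ`
from a vertex at graph distance exactly `r` from `Z` to a vertex of `Z`. -/
def Dset (G : SimpleGraph V) (Z : Set V) (r : ℕ) : Set (V → V) :=
  {ρ | ∃ x : V, ∃ ℓ : ℕ, (∀ w ∈ Z, r ≤ G.dist w x) ∧ (∃ w ∈ Z, G.dist w x = r) ∧
    ρ^[ℓ] x ∈ Z}

/-- The transition matrix `P_Z` of simple random walk on `G` killed upon hitting `Z`. -/
noncomputable def killedP (G : SimpleGraph V) [∀ v : V, Fintype (G.neighborSet v)]
    (Z : Set V) : Matrix {x : V // x ∉ Z} {x : V // x ∉ Z} ℝ :=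
  fun x y => if G.Adj x.1 y.1 then (1 : ℝ) / (G.degree x.1) else 0

/-- The Green function `((I - P_Z)⁻¹)_{a,x}` of simple random walk killed at `Z`,
as a function of a pair of vertices (zero if `V ∖ Z` is infinite or `a ∈ Z` or `x ∈ Z`). -/
noncomputable def greenFn (G : SimpleGraph V) [DecidableEq V]
    [∀ v : V, Fintype (G.neighborSet v)] (Z : Set V) (a x : V) : ℝ :=
  if h : ({y : V | y ∉ Z}).Finite ∧ a ∉ Z ∧ x ∉ Z then
    letI : Fintype {y : V // y ∉ Z} := h.1.fintype
    ((1 - killedP G Z)⁻¹) ⟨a, h.2.1⟩ ⟨x, h.2.2⟩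
  else 0

/-!
The rotor walk started on a forest of `SF(Z)` terminates: otherwise some vertex of the finite
set `V ∖ Z` is visited infinitely often, every visit advances its rotor, and since the rotor runs
through all neighbours, every neighbour, hence by connectedness every vertex, including those of
`Z`, is visited infinitely often. Throughout the walk the rotors form a forest oriented towards
`Z ∪ {X_t}` in which the rotor path from the start `a` leads to `X_t`. At the end this says that
`σ(a, Z; ρ) ∈ SF(Z)`. During the walk it determines the previous state from the current one, and
it shows that the walk never comes back to a state `(a, σ)` with `σ ∈ SF(Z)`; running two walks
with the same final state backwards therefore gives `σ(a, Z; ·)` injective on the finite set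
`SF(Z)`, hence bijective. `ξ_i` is a composition of such maps.
-/

section ReachesOutside

variable {α : Type*} {f g : α → α} {B C : Set α} {u v w : α}

/-- Iterating `f` leads from `v` to `w` without ever applying `f` at a point of `B`; such a path
stops at its first visit to `B` and only depends on `f` off `B`. -/
def ReachesOutside (f : α → α) (B : Set α) : α → α → Prop :=
  Relation.ReflTransGen fun u u' => u ∉ B ∧ f u = u'

namespace ReachesOutside

protected theorem refl : ReachesOutside f B v v := Relation.ReflTransGen.refl

protected theorem trans (h₁ : ReachesOutside f B u v) (h₂ : ReachesOutside f B v w) :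
    ReachesOutside f B u w :=
  Relation.ReflTransGen.trans h₁ h₂

theorem head (hv : v ∉ B) (hfv : f v = u) (h : ReachesOutside f B u w) :
    ReachesOutside f B v w :=
  Relation.ReflTransGen.head ⟨hv, hfv⟩ h

theorem tail (h : ReachesOutside f B v w) (hw : w ∉ B) : ReachesOutside f B v (f w) :=
  Relation.ReflTransGen.tail h ⟨hw, rfl⟩

theorem mono (hCB : C ⊆ B) (h : ReachesOutside f B v w) : ReachesOutside f C v w :=
  Relation.ReflTransGen.mono (fun _ _ h' => ⟨fun hC => h'.1 (hCB hC), h'.2⟩) _ _ h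

theorem congr (hfg : ∀ u ∉ B, f u = g u) (h : ReachesOutside f B v w) :
    ReachesOutside g B v w :=
  Relation.ReflTransGen.mono (fun u _ h' => ⟨h'.1, (hfg u h'.1).symm.trans h'.2⟩) _ _ h

theorem eq_of_mem (hv : v ∈ B) (h : ReachesOutside f B v w) : v = w := by
  rcases Relation.ReflTransGen.cases_head h with hvw | ⟨_, hstep, _⟩
  · exact hvw
  · exact absurd hv hstep.1

theorem eq_of_mem_of_mem (hu : ReachesOutside f B v u) (hw : ReachesOutside f B v w)
    (huB : u ∈ B) (hwB : w ∈ B) : u = w := by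
  have hunique : Relator.RightUnique fun u u' => u ∉ B ∧ f u = u' :=
    fun _ _ _ h h' => h.2.symm.trans h'.2
  rcases Relation.ReflTransGen.total_of_right_unique hunique hu hw with h | h
  · exact eq_of_mem huB h
  · exact (eq_of_mem hwB h).symm

theorem exists_first_mem (h : ReachesOutside f B v w) (hw : w ∈ C) :
    ∃ u ∈ C, ReachesOutside f C v u ∧ ReachesOutside f B u w := by
  induction h using Relation.ReflTransGen.head_induction_on with
  | refl => exact ⟨w, hw, .refl, .refl⟩
  | @head v v' hstep hv'w ih =>
    by_cases hv : v ∈ C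
    · exact ⟨v, hv, .refl, Relation.ReflTransGen.head hstep hv'w⟩
    · obtain ⟨u, hu, hv'u, huw⟩ := ih
      exact ⟨u, hu, head hv hstep.2 hv'u, huw⟩

theorem not_mem_of_cycle (hu : u ∉ B) (hcycle : ReachesOutside f B (f u) u)
    (h : ReachesOutside f B u w) : w ∉ B := by
  have hback : ReachesOutside f B w u := by
    induction h with
    | refl => exact .refl
    | tail _ hstep ih =>
      rcases Relation.ReflTransGen.cases_head ih with rfl | ⟨_, hstep', h'⟩
      · exact hstep.2 ▸ hcycle
      · exact hstep'.2.symm.trans hstep.2 ▸ h'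
  exact fun hw => hu (hback.eq_of_mem hw ▸ hw)

theorem exists_iterate_eq (h : ReachesOutside f B v w) : ∃ n, f^[n] v = w := by
  induction h with
  | refl => exact ⟨0, rfl⟩
  | tail _ hstep ih =>
    obtain ⟨n, hn⟩ := ih
    exact ⟨n + 1, by rw [Function.iterate_succ_apply', hn, hstep.2]⟩

theorem exists_of_iterate_mem {n : ℕ} (h : f^[n] v ∈ C) : ∃ w ∈ C, ReachesOutside f C v w := by
  induction n generalizing v with
  | zero => exact ⟨v, h, .refl⟩
  | succ n ih =>
    by_cases hv : v ∈ C
    · exact ⟨v, hv, .refl⟩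
    · obtain ⟨w, hw, h'⟩ := ih (Function.iterate_succ_apply f n v ▸ h)
      exact ⟨w, hw, head hv rfl h'⟩

/-- Redirecting `f` at a root `x` of the forest rooted at `insert x B` to a point `y`
makes `y` a root in place of `x`. -/
theorem update [DecidableEq α] {x y : α} (hx : x ∉ B) (hyx : y ≠ x)
    (h : ReachesOutside f (insert x B) v w) (hw : w ∈ insert x B) :
    ∃ w' ∈ insert y B, ReachesOutside (Function.update f x y) (insert y B) v w' ∧
      (w = x → w' = y) := by
  have hagree : ∀ u ∉ insert x B, f u = Function.update f x y u :=
    fun u hu => (Function.update_of_ne (fun hux : u = x => hu (hux ▸ Set.mem_insert x B)) _ _).symm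
  have hsub : insert y B ⊆ insert y (insert x B) :=
    Set.insert_subset_insert (Set.subset_insert x B)
  obtain ⟨u, hu, hvu, huw⟩ :=
    (h.congr hagree).exists_first_mem (Set.mem_insert_of_mem y hw)
  rcases hu with rfl | rfl | huB
  · exact ⟨u, Set.mem_insert u B, hvu.mono hsub, fun _ => rfl⟩
  · have hu : u ∉ insert y B := by rintro (hyu | huB) <;> [exact hyx hyu.symm; exact hx huB]
    refine ⟨y, Set.mem_insert y B, ?_, fun _ => rfl⟩
    simpa using (hvu.mono hsub).tail hu
  · obtain rfl := huw.eq_of_mem (Set.mem_insert_of_mem x huB)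
    exact ⟨u, Set.mem_insert_of_mem y huB, hvu.mono hsub, fun hux => absurd (hux ▸ huB) hx⟩

end ReachesOutside

end ReachesOutside

theorem IsMechanism.adj {G : SimpleGraph V} {τ : V → V → V} (hτ : IsMechanism G τ) {x y : V}
    (hy : G.Adj x y) : G.Adj x (τ x y) :=
  (hτ x).1.mapsTo hy

theorem SFset_finite {G : SimpleGraph V} [∀ v, Finite (G.neighborSet v)] {Z : Set V}
    (hfin : (Zᶜ : Set V).Finite) : (SFset G Z).Finite := by
  have : Finite (Zᶜ : Set V) := hfin.to_subtype
  have hinj : Set.InjOn (fun ρ (v : (Zᶜ : Set V)) => ρ v) (SFset G Z) := by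
    intro ρ₁ h₁ ρ₂ h₂ h
    funext v
    by_cases hv : v ∈ Z
    · rw [h₁.2.2 v hv, h₂.2.2 v hv]
    · exact congrFun h ⟨v, hv⟩
  refine Set.Finite.of_finite_image ?_ hinj
  refine (Set.Finite.pi' fun v : (Zᶜ : Set V) => Set.toFinite (G.neighborSet v)).subset ?_
  rintro _ ⟨ρ, hρ, rfl⟩ v
  exact hρ.1 v v.2

theorem eventualVal_eq {f : ℕ → V} {t : ℕ} (h : ∀ s, t ≤ s → f s = f t) :
    eventualVal f = f t := by
  have hconst : ∃ t, ∀ s, t ≤ s → f s = f t := ⟨t, h⟩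
  rw [eventualVal, dif_pos hconst, ← hconst.choose_spec _ (le_max_right t hconst.choose),
    h _ (le_max_left t hconst.choose)]

section RotorWalk

open Filter

variable [DecidableEq V] {G : SimpleGraph V} {τ : V → V → V} {Z : Set V} {a : V}
  {ρ : V → V} {p : V × (V → V)}

theorem rotorStep_of_mem (h : p.1 ∈ Z) : rotorStep τ Z p = p := if_pos h

theorem rotorStep_of_not_mem (h : p.1 ∉ Z) :
    rotorStep τ Z p = (τ p.1 (p.2 p.1), Function.update p.2 p.1 (τ p.1 (p.2 p.1))) :=
  if_neg h

theorem rotorStep_snd_of_ne {v : V} (h : p.1 ≠ v) : (rotorStep τ Z p).2 v = p.2 v := by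
  by_cases hp : p.1 ∈ Z
  · rw [rotorStep_of_mem hp]
  · rw [rotorStep_of_not_mem hp]
    exact Function.update_of_ne (Ne.symm h) _ _

theorem rotorWalk_succ (t : ℕ) :
    rotorWalk τ Z a ρ (t + 1) = rotorStep τ Z (rotorWalk τ Z a ρ t) :=
  Function.iterate_succ_apply' _ _ _

theorem rotorWalk_add_of_mem {t : ℕ} (h : (rotorWalk τ Z a ρ t).1 ∈ Z) (d : ℕ) :
    rotorWalk τ Z a ρ (t + d) = rotorWalk τ Z a ρ t := by
  induction d with
  | zero => rfl
  | succ d ih => rw [← add_assoc, rotorWalk_succ, ih, rotorStep_of_mem h]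

theorem finalConfig_eq_of_mem {t : ℕ} (h : (rotorWalk τ Z a ρ t).1 ∈ Z) :
    finalConfig τ Z a ρ = (rotorWalk τ Z a ρ t).2 := by
  funext x
  refine eventualVal_eq fun s hts => ?_
  obtain ⟨d, rfl⟩ := Nat.exists_eq_add_of_le hts
  rw [rotorWalk_add_of_mem h]

theorem adj_rotorStep (hτ : IsMechanism G τ) (h : ∀ v ∉ Z, G.Adj v (p.2 v)) :
    ∀ v ∉ Z, G.Adj v ((rotorStep τ Z p).2 v) := by
  intro v hv
  by_cases hpv : p.1 = v
  · subst hpv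
    rw [rotorStep_of_not_mem hv]
    simpa using hτ.adj (h _ hv)
  · rw [rotorStep_snd_of_ne hpv]
    exact h v hv

theorem adj_rotorWalk (hτ : IsMechanism G τ) (h : ∀ v ∉ Z, G.Adj v (ρ v)) (t : ℕ) :
    ∀ v ∉ Z, G.Adj v ((rotorWalk τ Z a ρ t).2 v) := by
  induction t with
  | zero => exact h
  | succ t ih => rw [rotorWalk_succ]; exact adj_rotorStep hτ ih

theorem rotorWalk_snd_eq_of_forall_ne {v : V} {t s : ℕ} (hts : t ≤ s)
    (h : ∀ r, t ≤ r → r < s → (rotorWalk τ Z a ρ r).1 ≠ v) :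
    (rotorWalk τ Z a ρ s).2 v = (rotorWalk τ Z a ρ t).2 v := by
  induction s, hts using Nat.le_induction with
  | base => rfl
  | succ s hts ih =>
    rw [rotorWalk_succ, rotorStep_snd_of_ne (h s hts s.lt_succ_self),
      ih fun r htr hrs => h r htr (hrs.trans s.lt_succ_self)]

theorem exists_visit_rotorWalk_snd_eq {v : V}
    (hv : ∃ᶠ s in atTop, (rotorWalk τ Z a ρ s).1 = v) (t : ℕ) :
    ∃ s ≥ t, (rotorWalk τ Z a ρ s).1 = v ∧
      (rotorWalk τ Z a ρ s).2 v = (rotorWalk τ Z a ρ t).2 v := by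
  have hvisit : ∃ d, (rotorWalk τ Z a ρ (t + d)).1 = v := by
    obtain ⟨s, hts, hs⟩ := frequently_atTop.mp hv t
    exact ⟨s - t, by rwa [Nat.add_sub_cancel' hts]⟩
  refine ⟨t + Nat.find hvisit, Nat.le_add_right _ _, Nat.find_spec hvisit,
    rotorWalk_snd_eq_of_forall_ne (Nat.le_add_right _ _) fun r htr hrs hr => ?_⟩
  exact Nat.find_min hvisit (show r - t < Nat.find hvisit by omega)
    (by rwa [Nat.add_sub_cancel' htr])

/-- Between two visits to `v` the rotor at `v` is untouched, and each visit turns it once. -/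
theorem exists_visit_rotorWalk_snd_eq_iterate {v : V} (hvZ : v ∉ Z)
    (hv : ∃ᶠ s in atTop, (rotorWalk τ Z a ρ s).1 = v) (t k : ℕ) :
    ∃ s ≥ t, (rotorWalk τ Z a ρ s).1 = v ∧
      (rotorWalk τ Z a ρ s).2 v = (τ v)^[k] ((rotorWalk τ Z a ρ t).2 v) := by
  induction k with
  | zero => exact exists_visit_rotorWalk_snd_eq hv t
  | succ k ih =>
    obtain ⟨s, hts, hs, hsv⟩ := ih
    obtain ⟨s', hss', hs', hs'v⟩ := exists_visit_rotorWalk_snd_eq hv (s + 1)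
    refine ⟨s', by omega, hs', ?_⟩
    rw [hs'v, rotorWalk_succ, rotorStep_of_not_mem (hs ▸ hvZ), hs]
    simp [hsv, Function.iterate_succ_apply']

theorem frequently_rotorWalk_fst_eq_of_adj (hτ : IsMechanism G τ)
    (hρ : ∀ v ∉ Z, G.Adj v (ρ v)) {v u : V} (hvZ : v ∉ Z) (huv : G.Adj v u)
    (hv : ∃ᶠ s in atTop, (rotorWalk τ Z a ρ s).1 = v) :
    ∃ᶠ s in atTop, (rotorWalk τ Z a ρ s).1 = u := by
  refine frequently_atTop.mpr fun t => ?_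
  obtain ⟨i, hi⟩ := (hτ v).2 _ (hτ.adj (adj_rotorWalk hτ hρ t v hvZ)) u huv
  obtain ⟨s, hts, hs, hsv⟩ := exists_visit_rotorWalk_snd_eq_iterate hvZ hv t i
  refine ⟨s + 1, by omega, ?_⟩
  rw [rotorWalk_succ, rotorStep_of_not_mem (hs ▸ hvZ), hs, hsv, ← hi]
  exact (Function.iterate_succ_apply' _ _ _).symm.trans (Function.iterate_succ_apply _ _ _)

theorem exists_rotorWalk_fst_mem (hconn : G.Connected) (hτ : IsMechanism G τ)
    (hZ : Z.Nonempty) (hfin : (Zᶜ : Set V).Finite) (hρ : ∀ v ∉ Z, G.Adj v (ρ v)) :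
    ∃ t, (rotorWalk τ Z a ρ t).1 ∈ Z := by
  by_contra! hactive
  obtain ⟨v, -, hv⟩ := (hfin.frequently_exists (p := fun v s => (rotorWalk τ Z a ρ s).1 = v)).mp
    (Frequently.of_forall (f := atTop) fun t => ⟨_, hactive t, rfl⟩)
  have hvisit (w : V) (hw : Relation.ReflTransGen G.Adj v w) :
      ∃ᶠ s in atTop, (rotorWalk τ Z a ρ s).1 = w := by
    induction hw with
    | refl => exact hv
    | tail _ hadj ih =>
      obtain ⟨t, ht⟩ := ih.exists
      exact frequently_rotorWalk_fst_eq_of_adj hτ hρ (ht ▸ hactive t) hadj ih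
  obtain ⟨z, hz⟩ := hZ
  obtain ⟨t, ht⟩ :=
    (hvisit z ((SimpleGraph.reachable_iff_reflTransGen v z).1 (hconn.preconnected v z))).exists
  exact hactive t (ht ▸ hz)

end RotorWalk

section Invariant

variable {G : SimpleGraph V} {τ : V → V → V} {Z : Set V} {a x : V} {ρ : V → V}

/-- The rotors `ρ` form a forest oriented towards `Z ∪ {x}` (the rotor at the walker's position
`x` is irrelevant), and the tree of `x` contains the starting point `a`. -/
structure RotorInvariant (G : SimpleGraph V) (Z : Set V) (a x : V) (ρ : V → V) : Prop where
  adj : ∀ v ∉ Z, G.Adj v (ρ v)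
  fixed : ∀ v ∈ Z, ρ v = v
  reaches : ∀ v, ∃ w ∈ insert x Z, ReachesOutside ρ (insert x Z) v w
  reaches_start : ReachesOutside ρ (insert x Z) a x

theorem rotorInvariant_of_mem_SFset (hρ : ρ ∈ SFset G Z) : RotorInvariant G Z a a ρ where
  adj := hρ.1
  fixed := hρ.2.2
  reaches v :=
    let ⟨_, hℓ⟩ := hρ.2.1 v
    ReachesOutside.exists_of_iterate_mem (Set.mem_insert_of_mem a hℓ)
  reaches_start := .refl

namespace RotorInvariant

theorem not_reachesOutside_self (h : RotorInvariant G Z a x ρ) {v : V} (hv : v ∉ insert x Z) :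
    ¬ ReachesOutside ρ (insert x Z) (ρ v) v := fun hcycle =>
  let ⟨_, hw, hvw⟩ := h.reaches v
  hcycle.not_mem_of_cycle hv hvw hw

theorem not_reachesOutside_start (h : RotorInvariant G Z a x ρ) (hx : x ∉ Z) {z : V}
    (hz : z ∈ Z) : ¬ ReachesOutside ρ (insert x Z) a z := fun haz =>
  hx (h.reaches_start.eq_of_mem_of_mem haz (Set.mem_insert x Z) (Set.mem_insert_of_mem x hz) ▸ hz)

variable [DecidableEq V]

/-- Two distinct predecessors `x₁ ≠ x₂` of the same forest would both point to `y`; following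
the rotors from `y` and from `a` up to `{x₁, x₂} ∪ Z` then closes a cycle or lets `a` reach `Z`
before `x₁` or `x₂`. -/
theorem eq_of_update_eq {x₁ x₂ y : V} {ρ₁ ρ₂ : V → V} (h₁ : RotorInvariant G Z a x₁ ρ₁)
    (h₂ : RotorInvariant G Z a x₂ ρ₂) (hx₁ : x₁ ∉ Z) (hx₂ : x₂ ∉ Z)
    (h : Function.update ρ₁ x₁ y = Function.update ρ₂ x₂ y) : x₁ = x₂ := by
  by_contra hne
  have hρ₁x₂ : ρ₁ x₂ = y := by simpa [Function.update_of_ne (Ne.symm hne)] using congrFun h x₂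
  have hρ₂x₁ : ρ₂ x₁ = y := by simpa [Function.update_of_ne hne] using (congrFun h x₁).symm
  set T := insert x₁ (insert x₂ Z)
  have hρ : ∀ v ∉ T, ρ₁ v = ρ₂ v := fun v hv => by
    have hv₁ : v ≠ x₁ := fun hvx => hv (hvx ▸ Set.mem_insert x₁ _)
    have hv₂ : v ≠ x₂ := fun hvx => hv (hvx ▸ Set.mem_insert_of_mem x₁ (Set.mem_insert x₂ Z))
    simpa [Function.update_of_ne hv₁, Function.update_of_ne hv₂] using congrFun h v
  have hS₁ : insert x₁ Z ⊆ T := Set.insert_subset_insert (Set.subset_insert x₂ Z)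
  have hS₂ : insert x₂ Z ⊆ T := Set.subset_insert x₁ _
  have hx₂S₁ : x₂ ∉ insert x₁ Z := by rintro (h | h) <;> [exact hne h.symm; exact hx₂ h]
  have hx₁S₂ : x₁ ∉ insert x₂ Z := by rintro (h | h) <;> [exact hne h; exact hx₁ h]
  obtain ⟨w, hw, hyw⟩ := h₁.reaches y
  obtain ⟨t, ht, hyt, -⟩ := hyw.exists_first_mem (hS₁ hw)
  have hyt' : ReachesOutside ρ₂ T y t := hyt.congr hρ
  have htZ : t ∈ Z := by
    simp only [T, Set.mem_insert_iff] at ht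
    rcases ht with rfl | rfl | htZ
    · exact absurd (hρ₂x₁ ▸ hyt'.mono hS₂) (h₂.not_reachesOutside_self hx₁S₂)
    · exact absurd (hρ₁x₂ ▸ hyt.mono hS₁) (h₁.not_reachesOutside_self hx₂S₁)
    · exact htZ
  obtain ⟨u, hu, hau, hux₁⟩ := h₁.reaches_start.exists_first_mem (C := T) (Set.mem_insert x₁ _)
  simp only [T, Set.mem_insert_iff] at hu
  rcases hu with hu | hu | huZ
  · rw [hu] at hau
    exact h₂.not_reachesOutside_start hx₂ htZ
      (((hau.congr hρ).mono hS₂).trans ((hyt'.mono hS₂).head hx₁S₂ hρ₂x₁))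
  · rw [hu] at hau
    exact h₁.not_reachesOutside_start hx₁ htZ
      ((hau.mono hS₁).trans ((hyt.mono hS₁).head hx₂S₁ hρ₁x₂))
  · exact hx₁ (hux₁.eq_of_mem (Set.mem_insert_of_mem x₁ huZ) ▸ huZ)

theorem eq_of_rotorStep_eq (hτ : IsMechanism G τ) {p₁ p₂ : V × (V → V)}
    (h₁ : RotorInvariant G Z a p₁.1 p₁.2) (h₂ : RotorInvariant G Z a p₂.1 p₂.2)
    (hp₁ : p₁.1 ∉ Z) (hp₂ : p₂.1 ∉ Z) (h : rotorStep τ Z p₁ = rotorStep τ Z p₂) : p₁ = p₂ := by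
  obtain ⟨x₁, ρ₁⟩ := p₁
  obtain ⟨x₂, ρ₂⟩ := p₂
  rw [rotorStep_of_not_mem hp₁, rotorStep_of_not_mem hp₂, Prod.mk.injEq] at h
  dsimp only at h h₁ h₂ hp₁ hp₂
  obtain ⟨hy, hρ⟩ := h
  rw [← hy] at hρ
  obtain rfl := h₁.eq_of_update_eq h₂ hp₁ hp₂ hρ
  have hρx : ρ₁ x₁ = ρ₂ x₁ := (hτ x₁).1.injOn (h₁.adj x₁ hp₁) (h₂.adj x₁ hp₂) hy
  obtain rfl : ρ₁ = ρ₂ := funext fun v => by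
    by_cases hv : v = x₁
    · rw [hv, hρx]
    · simpa [Function.update_of_ne hv] using congrFun hρ v
  rfl

/-- If the step led to `a`, the rotor path from `a` to the old position would close a cycle,
which a forest of `SF(Z)` does not have. -/
theorem rotorStep_ne {p : V × (V → V)} (h : RotorInvariant G Z a p.1 p.2) (hp : p.1 ∉ Z)
    {σ : V → V} (hσ : σ ∈ SFset G Z) : rotorStep τ Z p ≠ (a, σ) := by
  rw [rotorStep_of_not_mem hp, ne_eq, Prod.mk.injEq, not_and]
  rintro hya rfl
  have hcycle : ReachesOutside (Function.update p.2 p.1 (τ p.1 (p.2 p.1))) Z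
      (Function.update p.2 p.1 (τ p.1 (p.2 p.1)) p.1) p.1 := by
    rw [Function.update_self, hya]
    refine (h.reaches_start.congr fun v hv => ?_).mono (Set.subset_insert p.1 Z)
    exact (Function.update_of_ne (show v ≠ p.1 by rintro rfl; exact hv (Set.mem_insert _ Z))
      _ _).symm
  obtain ⟨ℓ, hℓ⟩ := hσ.2.1 p.1
  obtain ⟨w, hw, hxw⟩ := ReachesOutside.exists_of_iterate_mem hℓ
  exact hcycle.not_mem_of_cycle hp hxw hw

theorem rotorStep (hτ : IsMechanism G τ) {p : V × (V → V)} (h : RotorInvariant G Z a p.1 p.2) :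
    RotorInvariant G Z a (rotorStep τ Z p).1 (rotorStep τ Z p).2 := by
  by_cases hp : p.1 ∈ Z
  · rwa [rotorStep_of_mem hp]
  have hadj := adj_rotorStep hτ h.adj
  have hyx : τ p.1 (p.2 p.1) ≠ p.1 := (hτ.adj (h.adj p.1 hp)).ne'
  rw [rotorStep_of_not_mem hp] at hadj ⊢
  dsimp only at hadj ⊢
  refine ⟨hadj, fun v hv => ?_, fun v => ?_, ?_⟩
  · rw [Function.update_of_ne (show v ≠ p.1 by rintro rfl; exact hp hv)]
    exact h.fixed v hv
  · obtain ⟨w, hw, hvw⟩ := h.reaches v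
    obtain ⟨w', hw', hvw', -⟩ := hvw.update hp hyx hw
    exact ⟨w', hw', hvw'⟩
  · obtain ⟨_, -, hax, hx⟩ := h.reaches_start.update hp hyx (Set.mem_insert p.1 Z)
    exact hx rfl ▸ hax

end RotorInvariant

variable [DecidableEq V]

theorem rotorInvariant_rotorWalk (hτ : IsMechanism G τ) (hρ : ρ ∈ SFset G Z) (t : ℕ) :
    RotorInvariant G Z a (rotorWalk τ Z a ρ t).1 (rotorWalk τ Z a ρ t).2 := by
  induction t with
  | zero => exact rotorInvariant_of_mem_SFset hρ
  | succ t ih => rw [rotorWalk_succ]; exact ih.rotorStep hτ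

theorem eq_of_rotorWalk_eq (hτ : IsMechanism G τ) {ρ₁ ρ₂ : V → V} (h₁ : ρ₁ ∈ SFset G Z)
    (h₂ : ρ₂ ∈ SFset G Z) (m₁ m₂ : ℕ) (hm₁ : ∀ s < m₁, (rotorWalk τ Z a ρ₁ s).1 ∉ Z)
    (hm₂ : ∀ s < m₂, (rotorWalk τ Z a ρ₂ s).1 ∉ Z)
    (h : rotorWalk τ Z a ρ₁ m₁ = rotorWalk τ Z a ρ₂ m₂) : ρ₁ = ρ₂ := by
  induction m₁ generalizing m₂ with
  | zero =>
    cases m₂ with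
    | zero => exact congrArg Prod.snd h
    | succ m₂ =>
      rw [rotorWalk_succ] at h
      exact absurd h.symm ((rotorInvariant_rotorWalk hτ h₂ m₂).rotorStep_ne
        (hm₂ m₂ m₂.lt_succ_self) h₁)
  | succ m₁ ih =>
    cases m₂ with
    | zero =>
      rw [rotorWalk_succ] at h
      exact absurd h ((rotorInvariant_rotorWalk hτ h₁ m₁).rotorStep_ne
        (hm₁ m₁ m₁.lt_succ_self) h₂)
    | succ m₂ =>
      rw [rotorWalk_succ, rotorWalk_succ] at h
      exact ih m₂ (fun s hs => hm₁ s (hs.trans m₁.lt_succ_self))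
        (fun s hs => hm₂ s (hs.trans m₂.lt_succ_self))
        ((rotorInvariant_rotorWalk hτ h₁ m₁).eq_of_rotorStep_eq hτ
          (rotorInvariant_rotorWalk hτ h₂ m₂) (hm₁ m₁ m₁.lt_succ_self)
          (hm₂ m₂ m₂.lt_succ_self) h)

theorem finalConfig_mem_SFset (hτ : IsMechanism G τ) (hρ : ρ ∈ SFset G Z) {t : ℕ}
    (ht : (rotorWalk τ Z a ρ t).1 ∈ Z) : finalConfig τ Z a ρ ∈ SFset G Z := by
  have hinv := rotorInvariant_rotorWalk (a := a) hτ hρ t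
  rw [finalConfig_eq_of_mem ht]
  refine ⟨hinv.adj, fun v => ?_, hinv.fixed⟩
  obtain ⟨w, hw, hvw⟩ := hinv.reaches v
  obtain ⟨n, rfl⟩ := hvw.exists_iterate_eq
  rw [Set.insert_eq_of_mem ht] at hw
  exact ⟨n, hw⟩

theorem injOn_finalConfig (hτ : IsMechanism G τ)
    (hhit : ∀ ρ ∈ SFset G Z, ∃ t, (rotorWalk τ Z a ρ t).1 ∈ Z) :
    Set.InjOn (finalConfig τ Z a) (SFset G Z) := by
  have hfirst (ρ) (hρ : ρ ∈ SFset G Z) :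
      ∃ t, (rotorWalk τ Z a ρ t).1 ∈ Z ∧ ∀ s < t, (rotorWalk τ Z a ρ s).1 ∉ Z :=
    ⟨Nat.find (hhit ρ hρ), Nat.find_spec (hhit ρ hρ), fun _ => Nat.find_min (hhit ρ hρ)⟩
  intro ρ₁ h₁ ρ₂ h₂ h
  obtain ⟨t₁, ht₁, hpre₁⟩ := hfirst ρ₁ h₁
  obtain ⟨t₂, ht₂, hpre₂⟩ := hfirst ρ₂ h₂
  have hσ : (rotorWalk τ Z a ρ₁ t₁).2 = (rotorWalk τ Z a ρ₂ t₂).2 := by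
    rw [← finalConfig_eq_of_mem ht₁, ← finalConfig_eq_of_mem ht₂, h]
  have hstart₁ := (rotorInvariant_rotorWalk (a := a) hτ h₁ t₁).reaches_start
  have hstart₂ := (rotorInvariant_rotorWalk (a := a) hτ h₂ t₂).reaches_start
  rw [Set.insert_eq_of_mem ht₁] at hstart₁
  rw [Set.insert_eq_of_mem ht₂, ← hσ] at hstart₂
  exact eq_of_rotorWalk_eq hτ h₁ h₂ t₁ t₂ hpre₁ hpre₂
    (Prod.ext (hstart₁.eq_of_mem_of_mem hstart₂ ht₁ ht₂) hσ)

theorem bijOn_finalConfig [∀ v, Finite (G.neighborSet v)] (hconn : G.Connected)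
    (hτ : IsMechanism G τ) (hZ : Z.Nonempty) (hfin : (Zᶜ : Set V).Finite) (a : V) :
    Set.BijOn (finalConfig τ Z a) (SFset G Z) (SFset G Z) := by
  have hhit (ρ) (hρ : ρ ∈ SFset G Z) : ∃ t, (rotorWalk τ Z a ρ t).1 ∈ Z :=
    exists_rotorWalk_fst_mem hconn hτ hZ hfin hρ.1
  have hmaps : Set.MapsTo (finalConfig τ Z a) (SFset G Z) (SFset G Z) := fun ρ hρ =>
    let ⟨_, ht⟩ := hhit ρ hρ
    finalConfig_mem_SFset hτ hρ ht
  exact ((SFset_finite hfin).injOn_iff_bijOn_of_mapsTo hmaps).mp (injOn_finalConfig hτ hhit)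

end Invariant

/-- If `Z` is nonempty with `V ∖ Z` finite, then for any `i` and any
vertices `a_0, …, a_{i-1}`, the map `ρ ↦ ξ_i(a_0,…,a_{i-1},Z;ρ)` is a bijection
from `SF(Z)` to `SF(Z)`; consequently the uniform measure `OUSF(Z)` is preserved. -/
theorem stmt13 {V : Type u} [DecidableEq V] (G : SimpleGraph V) (hconn : G.Connected)
    [∀ v : V, Fintype (G.neighborSet v)] (τ : V → V → V) (hτ : IsMechanism G τ)
    (Z : Set V) (hZ : Z.Nonempty) (hfin : (Zᶜ : Set V).Finite)
    (i : ℕ) (av : ℕ → V) :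
    Set.BijOn (fun ρ => xiConfig τ Z av i ρ) (SFset G Z) (SFset G Z) := by
  induction i with
  | zero => exact Set.bijOn_id _
  | succ i ih => exact (bijOn_finalConfig hconn hτ hZ hfin (av i)).comp ih
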